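/- arXiv:1307.8403 — 2 statements merged into one kernel-verified Lean document; each statement's English description precedes it below -/
import Mathlib

section
/- Let X be the solution of the recursive distributional equation X =_d √U·X + √U·(1−√U), and let f be the version of its Lebesgue density satisfying the integral equation f(t) = 2·∫_{2√t−1}^{t} g(x,t)·f(x) dx + ∫_{t}^{1} (g(x,t) − 1)·f(x) dx for all t ∈ [0,1] and f = 0 outside [0,1], where g(x,t) := (1+x)/√((1+x)² − 4t). Then f(t) → 0 as t ↓ 0, and f has a right derivative at 0 given by lim_{t ↓ 0} f(t)/t = E[2/(1+X)²]; since f vanishes on (−∞, 0), f is not differentiable at 0. -/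
open MeasureTheory

noncomputable section

/-- The uniform distribution on `[0,1]`. -/
def unif : Measure ℝ := volume.restrict (Set.Icc 0 1)

/-- The map `(x, u) ↦ √u·x + √u·(1 − √u)`. -/
def rdeMap (q : ℝ × ℝ) : ℝ :=
  Real.sqrt q.2 * q.1 + Real.sqrt q.2 * (1 - Real.sqrt q.2)

/-- `μ` is a (probability) solution of the recursive distributional equation
`X =_d √U·X + √U·(1 − √U)` with `X, U` independent and `U` uniform on `[0,1]`. -/
def IsRDESolution (μ : Measure ℝ) : Prop :=
  IsProbabilityMeasure μ ∧ Measure.map rdeMap (μ.prod unif) = μ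

/-- The function `g(x,t) = (1+x)/√((1+x)² − 4t)`. -/
def gdens (x t : ℝ) : ℝ := (1 + x) / Real.sqrt ((1 + x) ^ 2 - 4 * t)

/-- `f` is the version of the Lebesgue density of `μ` which vanishes outside `[0,1]` and
satisfies the integral equation
`f(t) = 2·∫_{2√t−1}^{t} g(x,t)·f(x) dx + ∫_{t}^{1} (g(x,t) − 1)·f(x) dx` on `[0,1]`. -/
def IsRDEDensity (μ : Measure ℝ) (f : ℝ → ℝ) : Prop :=
  Measurable f ∧ (∀ t, 0 ≤ f t) ∧
  μ = volume.withDensity (fun t => ENNReal.ofReal (f t)) ∧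
  (∀ t : ℝ, t < 0 ∨ 1 < t → f t = 0) ∧
  ∀ t ∈ Set.Icc (0 : ℝ) 1,
    f t = 2 * (∫ x in (2 * Real.sqrt t - 1)..t, gdens x t * f x)
          + ∫ x in t..(1 : ℝ), (gdens x t - 1) * f x

/-!
For small `t > 0` the lower limit `2√t − 1` is negative, so the integral equation reads
`f(t) = 2∫₀ᵗ g f + ∫ₜ¹ (g − 1) f`, and `1 ≤ g(x,t) ≤ 1 + 6t` for `x ≥ 0`, `t ≤ 1/12`. Hence
`f(t) ≤ 3F(t) + 6t` for the primitive `F` of `f`; integrating this bound over `[0,t]` gives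
`F(t) = o(t)`, so the first term is `o(t)`. Since `∂ₜg(x,0) = 2/(1+x)²`, dominated convergence
with majorant `6f` sends `t⁻¹∫ₜ¹ (g − 1) f` to `∫ 2/(1+x)² f(x) dx = E[2/(1+X)²] > 0`, while the
left slopes of `f` at `0` vanish.
-/

open Filter Set Topology

lemma gdens_mem_Icc {x t : ℝ} (hx : 0 ≤ x) (ht0 : 0 ≤ t) (ht : t ≤ 1 / 12) :
    gdens x t ∈ Icc 1 (1 + 6 * t) := by
  have hD : 1 / 2 ≤ (1 + x) ^ 2 - 4 * t := by nlinarith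
  set s := √((1 + x) ^ 2 - 4 * t) with hs
  have hs0 : 0 < s := Real.sqrt_pos.2 (by linarith)
  have hs2 : s ^ 2 = (1 + x) ^ 2 - 4 * t := Real.sq_sqrt (by linarith)
  have hsx : s ≤ 1 + x := by nlinarith
  refine ⟨(one_le_div hs0).2 hsx, (div_le_iff₀ hs0).2 ?_⟩
  nlinarith [mul_nonneg ht0 (sub_nonneg.2 hsx)]

lemma hasDerivAt_gdens_zero {x : ℝ} (hx : 0 < 1 + x) :
    HasDerivAt (gdens x) (2 / (1 + x) ^ 2) 0 := by
  have hD : HasDerivAt (fun t : ℝ => (1 + x) ^ 2 - 4 * t) (-4) 0 := by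
    simpa using ((hasDerivAt_id (0 : ℝ)).const_mul 4).const_sub ((1 + x) ^ 2)
  have hsqrt : √((1 + x) ^ 2 - 4 * 0) = 1 + x := by simp [Real.sqrt_sq hx.le]
  have h := ((hD.sqrt (by simp; positivity)).inv (by rw [hsqrt]; exact hx.ne')).const_mul (1 + x)
  refine (h.congr_deriv ?_).congr_of_eventuallyEq (.of_forall fun t => div_eq_mul_inv _ _)
  rw [hsqrt]
  field_simp
  ring

lemma tendsto_gdens_sub_one_div {x : ℝ} (hx : 0 < 1 + x) :
    Tendsto (fun t => (gdens x t - 1) / t) (𝓝[>] 0) (𝓝 (2 / (1 + x) ^ 2)) := by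
  have h0 : gdens x 0 = 1 := by simp [gdens, Real.sqrt_sq hx.le, hx.ne']
  simpa [h0, div_eq_inv_mul] using (hasDerivAt_gdens_zero hx).tendsto_slope_zero_right

lemma intervalIntegral_eq_of_eq_zero_of_neg {h : ℝ → ℝ} {a b : ℝ} (hh : ∀ x < 0, h x = 0)
    (ha : a < 0) (hb : 0 ≤ b) : ∫ x in a..b, h x = ∫ x in 0..b, h x := by
  rw [intervalIntegral.integral_of_le (ha.le.trans hb), intervalIntegral.integral_of_le hb,
    ← integral_Icc_eq_integral_Ioc (x := 0)]
  refine setIntegral_eq_of_subset_of_forall_sdiff_eq_zero measurableSet_Ioc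
    (fun x hx => ⟨ha.trans_le hx.1, hx.2⟩) fun x hx => hh x ?_
  by_contra! hx0
  exact hx.2 ⟨hx0, hx.1.2⟩

lemma tendsto_integral_div_of_le_mul_integral_add {f : ℝ → ℝ} {a b : ℝ} (hf : Integrable f)
    (hpos : ∀ x, 0 ≤ f x) (ha : 0 ≤ a) (hb : 0 ≤ b)
    (hle : ∀ᶠ t in 𝓝[>] 0, f t ≤ a * (∫ x in 0..t, f x) + b * t) :
    Tendsto (fun t => (∫ x in 0..t, f x) / t) (𝓝[>] 0) (𝓝 0) := by
  set F := fun t => ∫ x in 0..t, f x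
  have hbound : Tendsto (fun t => a * F t + b * t) (𝓝[>] 0) (𝓝 0) := by
    have hcont : Continuous fun t => a * F t + b * t :=
      ((intervalIntegral.continuous_primitive (fun _ _ => hf.intervalIntegrable) 0).const_mul a).add
        (continuous_const.mul continuous_id)
    simpa [F] using (hcont.tendsto 0).mono_left nhdsWithin_le_nhds
  obtain ⟨ε, hε, hεle⟩ := mem_nhdsGT_iff_exists_Ioo_subset.1 hle
  refine squeeze_zero' ?_ ?_ hbound
  · filter_upwards [self_mem_nhdsWithin] with t ht
    exact div_nonneg (intervalIntegral.integral_nonneg (le_of_lt ht) fun x _ => hpos x)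
      (le_of_lt ht)
  · filter_upwards [Ioo_mem_nhdsGT hε] with t ht
    have hf_le : ∀ s ∈ Ioo 0 t, f s ≤ a * F t + b * t := fun s hs =>
      (hεle ⟨hs.1, hs.2.trans ht.2⟩).trans <| add_le_add
        (mul_le_mul_of_nonneg_left (intervalIntegral.integral_mono_interval le_rfl hs.1.le hs.2.le
          (.of_forall fun x => hpos x) hf.intervalIntegrable) ha)
        (mul_le_mul_of_nonneg_left hs.2.le hb)
    rw [div_le_iff₀ ht.1]
    calc F t ≤ ∫ _ in 0..t, (a * F t + b * t) :=
          intervalIntegral.integral_mono_on_of_le_Ioo ht.1.le hf.intervalIntegrable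
            intervalIntegrable_const hf_le
      _ = (a * F t + b * t) * t := by simp; ring

lemma not_differentiableAt_zero_of_tendsto_div {f : ℝ → ℝ} {L : ℝ} (hneg : ∀ t < 0, f t = 0)
    (hL : L ≠ 0) (h : Tendsto (fun t => f t / t) (𝓝[>] 0) (𝓝 L)) : ¬DifferentiableAt ℝ f 0 := by
  intro hd
  have hleft : ∀ᶠ t in 𝓝[<] 0, f t = 0 := eventually_nhdsWithin_of_forall hneg
  have hf0 : f 0 = 0 := tendsto_nhds_unique (hd.continuousAt.tendsto.mono_left nhdsWithin_le_nhds)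
    (tendsto_const_nhds.congr' (hleft.mono fun t ht => ht.symm))
  have hslope := hasDerivAt_iff_tendsto_slope.1 hd.hasDerivAt
  have hslope_eq : slope f 0 = fun t => f t / t := by ext t; simp [slope_def_field, hf0]
  rw [hslope_eq] at hslope
  have hright := tendsto_nhds_unique (hslope.mono_left (nhdsGT_le_nhdsNE 0)) h
  have hleft' := tendsto_nhds_unique (hslope.mono_left (nhdsLT_le_nhdsNE 0))
    ((tendsto_const_nhds (x := (0 : ℝ))).congr' (hleft.mono fun t ht => by simp [ht]))
  exact hL (hright.symm.trans hleft')

lemma two_div_one_add_sq_mem_Icc {x : ℝ} (hx : x ∈ Icc (0 : ℝ) 1) :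
    2 / (1 + x) ^ 2 ∈ Icc (1 / 2 : ℝ) 2 := by
  have h1 : 1 ≤ (1 + x) ^ 2 := by nlinarith [hx.1]
  have h4 : (1 + x) ^ 2 ≤ 4 := by nlinarith [hx.1, hx.2]
  constructor
  · rw [le_div_iff₀ (by positivity)]; linarith
  · rw [div_le_iff₀ (by positivity)]; linarith

lemma integral_two_div_sq_mul_pos {f : ℝ → ℝ} (hf : Integrable f) (hpos : ∀ x, 0 ≤ f x)
    (hzero : ∀ x : ℝ, x < 0 ∨ 1 < x → f x = 0) (hf_pos : 0 < ∫ x, f x) :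
    0 < ∫ x, 2 / (1 + x) ^ 2 * f x := by
  have hbounds : ∀ x, 1 / 2 * f x ≤ 2 / (1 + x) ^ 2 * f x ∧ 2 / (1 + x) ^ 2 * f x ≤ 2 * f x := by
    intro x
    by_cases hx : x ∈ Icc (0 : ℝ) 1
    · have hw := two_div_one_add_sq_mem_Icc hx
      exact ⟨mul_le_mul_of_nonneg_right hw.1 (hpos x), mul_le_mul_of_nonneg_right hw.2 (hpos x)⟩
    · rw [mem_Icc, not_and_or, not_le, not_le] at hx
      simp [hzero x hx]
  have hint : Integrable fun x => 2 / (1 + x) ^ 2 * f x :=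
    (hf.const_mul 2).mono'
      ((by fun_prop : Measurable fun x : ℝ => 2 / (1 + x) ^ 2).aestronglyMeasurable.mul hf.1)
      (.of_forall fun x => by
        rw [Real.norm_eq_abs,
          abs_of_nonneg ((mul_nonneg (by norm_num) (hpos x)).trans (hbounds x).1)]
        exact (hbounds x).2)
  calc 0 < ∫ x, 1 / 2 * f x := by rw [integral_const_mul]; positivity
    _ ≤ _ := integral_mono (hf.const_mul _) hint fun x => (hbounds x).1

def gdensSlopeIntegrand (f : ℝ → ℝ) (t x : ℝ) : ℝ :=
  (Ioc t 1).indicator (fun x => (gdens x t - 1) / t * f x) x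

section gdensSlopeIntegrand

variable {f : ℝ → ℝ} {t x : ℝ}

lemma integral_gdensSlopeIntegrand (ht : t ≤ 1) :
    ∫ x, gdensSlopeIntegrand f t x = (∫ x in t..1, (gdens x t - 1) * f x) / t := by
  simp_rw [gdensSlopeIntegrand, div_mul_eq_mul_div]
  rw [integral_indicator measurableSet_Ioc, intervalIntegral.integral_of_le ht, integral_div]

lemma gdensSlopeIntegrand_mem_Icc (hfx : 0 ≤ f x) (ht0 : 0 < t) (ht : t ≤ 1 / 12) :
    gdensSlopeIntegrand f t x ∈ Icc 0 (6 * f x) := by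
  by_cases hx : x ∈ Ioc t 1
  · have hg := gdens_mem_Icc (ht0.trans hx.1).le ht0.le ht
    rw [gdensSlopeIntegrand, indicator_of_mem hx]
    refine ⟨by have := hg.1; positivity, mul_le_mul_of_nonneg_right ?_ hfx⟩
    rw [div_le_iff₀ ht0]; linarith [hg.2]
  · rw [gdensSlopeIntegrand, indicator_of_notMem hx]
    exact ⟨le_rfl, by positivity⟩

lemma tendsto_gdensSlopeIntegrand (hx : x ∈ Ioc (0 : ℝ) 1) :
    Tendsto (fun t => gdensSlopeIntegrand f t x) (𝓝[>] 0) (𝓝 (2 / (1 + x) ^ 2 * f x)) := by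
  refine ((tendsto_gdens_sub_one_div (by linarith [hx.1])).mul_const (f x)).congr' ?_
  filter_upwards [Ioo_mem_nhdsGT hx.1] with t ht
  rw [gdensSlopeIntegrand, indicator_of_mem (show x ∈ Ioc t 1 from ⟨ht.2, hx.2⟩)]

lemma tendsto_integral_gdensSlopeIntegrand (hf : Integrable f) (hpos : ∀ x, 0 ≤ f x)
    (hzero : ∀ x : ℝ, x < 0 ∨ 1 < x → f x = 0) :
    Tendsto (fun t => ∫ x, gdensSlopeIntegrand f t x) (𝓝[>] 0)
      (𝓝 (∫ x, 2 / (1 + x) ^ 2 * f x)) := by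
  refine tendsto_integral_filter_of_dominated_convergence (fun x => 6 * f x)
    (.of_forall fun t => ?_) ?_ (hf.const_mul 6) ?_
  · have hg : Measurable fun x => gdens x t := by unfold gdens; fun_prop
    exact (((hg.sub_const 1).div_const t).aestronglyMeasurable.mul hf.1).indicator
      measurableSet_Ioc
  · filter_upwards [Ioc_mem_nhdsGT (by norm_num : (0 : ℝ) < 1 / 12)] with t ht
    refine .of_forall fun x => ?_
    have h := gdensSlopeIntegrand_mem_Icc (hpos x) ht.1 ht.2
    rw [Real.norm_eq_abs, abs_of_nonneg h.1]
    exact h.2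
  · filter_upwards [Measure.ae_ne volume 0] with x hx0
    by_cases hx : x ∈ Ioc (0 : ℝ) 1
    · exact tendsto_gdensSlopeIntegrand hx
    · have hfx : f x = 0 := hzero x <| by
        simp only [mem_Ioc, not_and_or, not_lt, not_le] at hx
        rcases hx with hx | hx
        · exact .inl (lt_of_le_of_ne hx hx0)
        · exact .inr hx
      simp [gdensSlopeIntegrand, indicator_apply, hfx]

end gdensSlopeIntegrand

namespace IsRDEDensity

variable {μ : Measure ℝ} {f : ℝ → ℝ}

lemma measurable (hf : IsRDEDensity μ f) : Measurable f := hf.1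

lemma nonneg (hf : IsRDEDensity μ f) : ∀ x, 0 ≤ f x := hf.2.1

lemma eq_withDensity (hf : IsRDEDensity μ f) :
    μ = volume.withDensity (fun t => ENNReal.ofReal (f t)) := hf.2.2.1

lemma eq_zero_of_lt_or_lt (hf : IsRDEDensity μ f) : ∀ x : ℝ, x < 0 ∨ 1 < x → f x = 0 :=
  hf.2.2.2.1

lemma lintegral_ofReal_eq (hf : IsRDEDensity μ f) : ∫⁻ x, ENNReal.ofReal (f x) = μ univ := by
  rw [hf.eq_withDensity, withDensity_apply _ MeasurableSet.univ, Measure.restrict_univ]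

lemma integrable [IsFiniteMeasure μ] (hf : IsRDEDensity μ f) : Integrable f :=
  ⟨hf.measurable.aestronglyMeasurable, (hasFiniteIntegral_iff_ofReal (.of_forall hf.nonneg)).2
    (hf.lintegral_ofReal_eq ▸ measure_lt_top μ univ)⟩

lemma integral_eq_one [IsProbabilityMeasure μ] (hf : IsRDEDensity μ f) : ∫ x, f x = 1 := by
  rw [integral_eq_lintegral_of_nonneg_ae (.of_forall hf.nonneg) hf.measurable.aestronglyMeasurable,
    hf.lintegral_ofReal_eq, measure_univ, ENNReal.toReal_one]

lemma integral_eq_integral_mul (hf : IsRDEDensity μ f) (φ : ℝ → ℝ) :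
    ∫ x, φ x ∂μ = ∫ x, φ x * f x := by
  rw [hf.eq_withDensity, integral_withDensity_eq_integral_toReal_smul hf.measurable.ennreal_ofReal
    (.of_forall fun _ => ENNReal.ofReal_lt_top)]
  congr with x
  rw [ENNReal.toReal_ofReal (hf.nonneg x), smul_eq_mul, mul_comm]

lemma eq_two_mul_integral_add_integral (hf : IsRDEDensity μ f) {t : ℝ} (ht0 : 0 < t)
    (ht : t < 1 / 4) :
    f t = 2 * (∫ x in 0..t, gdens x t * f x) + ∫ x in t..1, (gdens x t - 1) * f x := by
  have hsqrt : √t < 1 / 2 := (Real.sqrt_lt' (by norm_num)).2 (by linarith)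
  rw [hf.2.2.2.2 t ⟨ht0.le, by linarith⟩, intervalIntegral_eq_of_eq_zero_of_neg
    (fun x hx => by rw [hf.eq_zero_of_lt_or_lt x (.inl hx), mul_zero]) (by linarith) ht0.le]

lemma integral_gdens_mul_mem_Icc (hf : IsRDEDensity μ f) [IsFiniteMeasure μ] {t : ℝ}
    (ht0 : 0 < t) (ht : t ≤ 1 / 12) :
    ∫ x in 0..t, gdens x t * f x ∈ Icc 0 (3 / 2 * ∫ x in 0..t, f x) := by
  have hbounds : ∀ x ∈ Ioc 0 t, gdens x t * f x ∈ Icc 0 (3 / 2 * f x) := fun x hx => by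
    have hg := gdens_mem_Icc hx.1.le ht0.le ht
    exact ⟨mul_nonneg (by linarith [hg.1]) (hf.nonneg x),
      mul_le_mul_of_nonneg_right (by linarith [hg.2]) (hf.nonneg x)⟩
  rw [intervalIntegral.integral_of_le ht0.le, intervalIntegral.integral_of_le ht0.le,
    ← integral_const_mul]
  exact ⟨setIntegral_nonneg measurableSet_Ioc fun x hx => (hbounds x hx).1,
    integral_mono_of_nonneg
      (ae_restrict_of_forall_mem measurableSet_Ioc fun x hx => (hbounds x hx).1)
      (hf.integrable.const_mul _).integrableOn
      (ae_restrict_of_forall_mem measurableSet_Ioc fun x hx => (hbounds x hx).2)⟩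

lemma eventually_le_integral_add [IsProbabilityMeasure μ] (hf : IsRDEDensity μ f) :
    ∀ᶠ t in 𝓝[>] 0, f t ≤ 3 * (∫ x in 0..t, f x) + 6 * t := by
  filter_upwards [Ioc_mem_nhdsGT (by norm_num : (0 : ℝ) < 1 / 12)] with t ht
  have hfirst := (hf.integral_gdens_mul_mem_Icc ht.1 ht.2).2
  have hsecond : (∫ x in t..1, (gdens x t - 1) * f x) / t ≤ 6 := by
    rw [← integral_gdensSlopeIntegrand (by linarith [ht.2]), ← mul_one 6, ← hf.integral_eq_one,
      ← integral_const_mul]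
    exact integral_mono_of_nonneg
      (.of_forall fun x => (gdensSlopeIntegrand_mem_Icc (hf.nonneg x) ht.1 ht.2).1)
      (hf.integrable.const_mul 6)
      (.of_forall fun x => (gdensSlopeIntegrand_mem_Icc (hf.nonneg x) ht.1 ht.2).2)
  rw [div_le_iff₀ ht.1] at hsecond
  rw [hf.eq_two_mul_integral_add_integral ht.1 (by linarith [ht.2])]
  linarith

lemma tendsto_div [IsProbabilityMeasure μ] (hf : IsRDEDensity μ f) :
    Tendsto (fun t => f t / t) (𝓝[>] 0) (𝓝 (∫ x, 2 / (1 + x) ^ 2 ∂μ)) := by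
  have hfirst : Tendsto (fun t => 2 * (∫ x in 0..t, gdens x t * f x) / t) (𝓝[>] 0) (𝓝 0) := by
    have hF := (tendsto_integral_div_of_le_mul_integral_add hf.integrable hf.nonneg (by norm_num)
      (by norm_num) hf.eventually_le_integral_add).const_mul 3
    rw [mul_zero] at hF
    refine squeeze_zero' ?_ ?_ hF
    · filter_upwards [Ioc_mem_nhdsGT (by norm_num : (0 : ℝ) < 1 / 12)] with t ht
      exact div_nonneg (mul_nonneg two_pos.le (hf.integral_gdens_mul_mem_Icc ht.1 ht.2).1) ht.1.le
    · filter_upwards [Ioc_mem_nhdsGT (by norm_num : (0 : ℝ) < 1 / 12)] with t ht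
      have := (hf.integral_gdens_mul_mem_Icc ht.1 ht.2).2
      rw [mul_div_assoc']
      exact div_le_div_of_nonneg_right (by linarith) ht.1.le
  have hsecond :=
    tendsto_integral_gdensSlopeIntegrand hf.integrable hf.nonneg hf.eq_zero_of_lt_or_lt
  rw [hf.integral_eq_integral_mul]
  refine (zero_add (∫ x, 2 / (1 + x) ^ 2 * f x) ▸ hfirst.add hsecond).congr' ?_
  filter_upwards [Ioc_mem_nhdsGT (by norm_num : (0 : ℝ) < 1 / 12)] with t ht
  rw [integral_gdensSlopeIntegrand (by linarith [ht.2]),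
    hf.eq_two_mul_integral_add_integral ht.1 (by linarith [ht.2]), add_div]

end IsRDEDensity

open Filter in
/-- The version `f` of the density of the RDE solution satisfying the integral equation
tends to `0` as `t ↓ 0` and has right derivative `E[2/(1+X)²]` at `0`, i.e.
`lim_{t ↓ 0} f(t)/t = E[2/(1+X)²]`; since `f` vanishes on `(−∞, 0)`, `f` is not
differentiable at `0`. -/
theorem rde_density_right_derivative (μ : Measure ℝ) (hμ : IsRDESolution μ)
    (f : ℝ → ℝ) (hf : IsRDEDensity μ f) :
    Tendsto f (nhdsWithin 0 (Set.Ioi 0)) (nhds 0) ∧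
    Tendsto (fun t => f t / t) (nhdsWithin 0 (Set.Ioi 0))
      (nhds (∫ x, 2 / (1 + x) ^ 2 ∂ μ)) ∧
    ¬ DifferentiableAt ℝ f 0 := by
  have := hμ.1
  have hslope := hf.tendsto_div
  have hL : 0 < ∫ x, 2 / (1 + x) ^ 2 ∂μ := by
    rw [hf.integral_eq_integral_mul]
    exact integral_two_div_sq_mul_pos hf.integrable hf.nonneg hf.eq_zero_of_lt_or_lt
      (by simp [hf.integral_eq_one])
  refine ⟨?_, hslope, not_differentiableAt_zero_of_tendsto_div
    (fun t ht => hf.eq_zero_of_lt_or_lt t (.inl ht)) hL.ne' hslope⟩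
  have hmul := hslope.mul (tendsto_nhdsWithin_of_tendsto_nhds (tendsto_id (x := 𝓝 (0 : ℝ))))
  rw [mul_zero] at hmul
  refine hmul.congr' ?_
  filter_upwards [self_mem_nhdsWithin] with t (ht : 0 < t)
  exact div_mul_cancel₀ _ ht.ne'
end
end

section
/- Let X be the solution of the recursive distributional equation X =_d √U·X + √U·(1−√U). Then for every real ε > 0 the negative moment E[X^{−2+ε}] is finite. -/
/-!
Write `a = √U`, so the recursion reads `X' = a·(X + 1 − a)`. A stationary law of a random map
gives no mass to a set that the map cannot enter from outside and that it leaves with positive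
probability from every point inside; applied to `(−∞, −s)` and `(1 + s, ∞)` this shows
`0 ≤ X ≤ 1` almost surely, which settles the case `ε ≥ 2`.

For `x ≥ 0`, `a·(x + 1 − a) ≤ t` forces `a ≤ 2t`, or `x ≤ 2t` and `a ≥ 1 − 2t`. Hence
`F(t) = P(X ≤ t)` satisfies `F(t) ≤ 4t² + 4t·F(2t)`, and two iterations give `F(t) ≤ 64t²`.
By the layer-cake formula a distribution function that is `O(t²)` at `0` has
`E[X^(−r)] < ∞` for every `r < 2`.
-/

open MeasureTheory

noncomputable section

open Set Filter
open scoped ENNReal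

section

variable {α β : Type*} [MeasurableSpace α] [MeasurableSpace β] {μ : Measure α} {ν : Measure β}
  {T : α × β → α} {S : Set α}

theorem measure_eq_lintegral_of_map_prod_eq [SFinite ν] (hT : Measurable T)
    (h : (μ.prod ν).map T = μ) (hS : MeasurableSet S) :
    μ S = ∫⁻ x, ν {y | T (x, y) ∈ S} ∂μ := by
  conv_lhs => rw [← h]
  rw [Measure.map_apply hT hS, Measure.prod_apply (hT hS)]
  rfl

theorem measure_eq_zero_of_map_prod_eq [IsFiniteMeasure μ] [SFinite ν] (hT : Measurable T)
    (h : (μ.prod ν).map T = μ) (hS : MeasurableSet S)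
    (h_out : ∀ x ∉ S, ν {y | T (x, y) ∈ S} = 0) (h_in : ∀ x ∈ S, ν {y | T (x, y) ∈ S} < 1) :
    μ S = 0 := by
  by_contra hμS
  have h_eq := measure_eq_lintegral_of_map_prod_eq hT h hS
  rw [← lintegral_add_compl _ hS, setLIntegral_congr_fun hS.compl h_out, lintegral_zero,
    add_zero] at h_eq
  have h_lt : ∫⁻ x in S, ν {y | T (x, y) ∈ S} ∂μ < ∫⁻ x in S, 1 ∂μ :=
    setLIntegral_strict_mono hS hμS measurable_const (h_eq ▸ measure_ne_top μ S)
      (ae_of_all _ h_in)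
  rw [← h_eq, setLIntegral_const, one_mul] at h_lt
  exact h_lt.false

end

theorem ae_le_of_forall_pos_ae_le_add {α : Type*} [MeasurableSpace α] {μ : Measure α}
    {f g : α → ℝ} (h : ∀ s > 0, ∀ᵐ x ∂μ, f x ≤ g x + s) : ∀ᵐ x ∂μ, f x ≤ g x := by
  filter_upwards [ae_all_iff.2 fun n : ℕ => h (1 / (n + 1)) Nat.one_div_pos_of_nat] with x hx
  refine le_of_forall_pos_le_add fun s hs => ?_
  obtain ⟨n, hn⟩ := exists_nat_one_div_lt hs
  linarith [hx n]

theorem lintegral_rpow_neg_lt_top_of_measure_Iic_le {μ : Measure ℝ} [IsFiniteMeasure μ]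
    (hμ : ∀ᵐ x ∂μ, 0 ≤ x) {C q r : ℝ} (hC : ∀ t > 0, μ (Iic t) ≤ ENNReal.ofReal (C * t ^ q))
    (hr : 0 < r) (hrq : r < q) : ∫⁻ x, ENNReal.ofReal (x ^ (-r)) ∂μ < ∞ := by
  have h_inv : ∫⁻ x, ENNReal.ofReal (x ^ (-r)) ∂μ = ∫⁻ x, ENNReal.ofReal (x⁻¹ ^ r) ∂μ :=
    lintegral_congr_ae (hμ.mono fun x hx => by dsimp only; rw [Real.inv_rpow hx, Real.rpow_neg hx])
  rw [h_inv, lintegral_rpow_eq_lintegral_meas_lt_mul μ (hμ.mono fun x hx => inv_nonneg.2 hx)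
    measurable_inv.aemeasurable hr]
  refine ENNReal.mul_lt_top ENNReal.ofReal_lt_top ?_
  have h_tail : ∀ t > 0, μ {x | t < x⁻¹} ≤ ENNReal.ofReal (C * t ^ (-q)) := by
    intro t ht
    calc μ {x | t < x⁻¹} ≤ μ (Iic t⁻¹) := measure_mono fun x (hx : t < x⁻¹) =>
          ((lt_inv_comm₀ ht (inv_pos.1 (ht.trans hx))).1 hx).le
      _ ≤ ENNReal.ofReal (C * t ^ (-q)) := by
          rw [Real.rpow_neg ht.le, ← Real.inv_rpow ht.le]
          exact hC t⁻¹ (inv_pos.2 ht)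
  rw [← Ioc_union_Ioi_eq_Ioi zero_le_one]
  refine (lintegral_union_le _ _ _).trans_lt (ENNReal.add_lt_top.2 ⟨?_, ?_⟩)
  · calc ∫⁻ t in Ioc 0 1, μ {x | t < x⁻¹} * ENNReal.ofReal (t ^ (r - 1))
        ≤ ∫⁻ t in Ioc 0 1, μ univ * ENNReal.ofReal (t ^ (r - 1)) := by
          gcongr
          exact subset_univ _
      _ < ∞ := by
          rw [lintegral_const_mul' _ _ (measure_ne_top μ univ)]
          refine ENNReal.mul_lt_top (measure_lt_top μ univ) (IntegrableOn.setLIntegral_lt_top ?_)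
          exact (integrableOn_Ioc_iff_integrableOn_Ioo (by finiteness)).2
            ((intervalIntegral.integrableOn_Ioo_rpow_iff one_pos).2 (by linarith))
  · calc ∫⁻ t in Ioi 1, μ {x | t < x⁻¹} * ENNReal.ofReal (t ^ (r - 1))
        ≤ ∫⁻ t in Ioi 1, ENNReal.ofReal (C * t ^ (-q + (r - 1))) := by
          refine setLIntegral_mono' measurableSet_Ioi fun t (ht : 1 < t) => ?_
          rw [Real.rpow_add (zero_lt_one.trans ht), ← mul_assoc,
            ENNReal.ofReal_mul' (by positivity)]
          gcongr
          exact h_tail t (zero_lt_one.trans ht)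
      _ < ∞ := IntegrableOn.setLIntegral_lt_top <|
          (integrableOn_Ioi_rpow_of_lt (by linarith) one_pos).const_mul C

instance : IsProbabilityMeasure unif :=
  ⟨by simp [unif, Real.volume_Icc]⟩

theorem measurable_rdeMap : Measurable rdeMap := by
  unfold rdeMap
  fun_prop

theorem unif_mono {A B : Set ℝ} (h : ∀ u ∈ Icc (0 : ℝ) 1, u ∈ A → u ∈ B) : unif A ≤ unif B :=
  measure_mono_ae ((ae_restrict_mem measurableSet_Icc).mono fun u hu hA => h u hu hA)

theorem unif_le_volume (A : Set ℝ) : unif A ≤ volume A :=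
  Measure.le_iff'.1 Measure.restrict_le_self A

theorem unif_setOf_le_sqrt_mul_lt_one {s : ℝ} (hs : 0 < s) (d : ℝ) :
    unif {u | s ≤ √u * d} < 1 := by
  -- `1 + d ^ 2` rather than `d ^ 2` keeps the lower end positive also at `d = 0`.
  have h_sub : unif {u | s ≤ √u * d} ≤ unif (Icc (s ^ 2 / (1 + d ^ 2)) 1) := by
    refine unif_mono fun u hu h => ⟨?_, hu.2⟩
    have hsq : s ^ 2 ≤ u * d ^ 2 := by
      have := pow_le_pow_left₀ hs.le h 2
      rwa [mul_pow, Real.sq_sqrt hu.1] at this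
    rw [div_le_iff₀ (by positivity)]
    nlinarith [hu.1]
  refine h_sub.trans_lt ((unif_le_volume _).trans_lt ?_)
  rw [Real.volume_Icc, ENNReal.ofReal_lt_one]
  have : 0 < s ^ 2 / (1 + d ^ 2) := by positivity
  linarith

theorem le_two_mul_or_of_mul_add_mul_one_sub_le {a x t : ℝ} (ha0 : 0 ≤ a) (ha1 : a ≤ 1)
    (hx : 0 ≤ x) (h : a * x + a * (1 - a) ≤ t) : a ≤ 2 * t ∨ (x ≤ 2 * t ∧ 1 - 2 * t ≤ a) := by
  have hxa : 0 ≤ a * x := mul_nonneg ha0 hx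
  rcases le_or_gt a (1 / 2) with ha | ha
  · left
    nlinarith
  · right
    constructor <;> nlinarith

theorem unif_setOf_rdeMap_le {x t : ℝ} (hx : 0 ≤ x) (ht : t ≤ 1 / 2) :
    unif {u | rdeMap (x, u) ≤ t}
      ≤ ENNReal.ofReal (4 * t ^ 2)
        + (Iic (2 * t)).indicator (fun _ => ENNReal.ofReal (4 * t)) x := by
  have h_cases : ∀ u ∈ Icc (0 : ℝ) 1, rdeMap (x, u) ≤ t →
      u ∈ Icc 0 (4 * t ^ 2) ∨ (x ≤ 2 * t ∧ u ∈ Icc ((1 - 2 * t) ^ 2) 1) := by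
    intro u hu h
    have ha0 := Real.sqrt_nonneg u
    have hau := Real.sq_sqrt hu.1
    rcases le_two_mul_or_of_mul_add_mul_one_sub_le ha0 (Real.sqrt_le_one.2 hu.2) hx h with
      ha | ⟨hx2, ha⟩
    · exact Or.inl ⟨hu.1, by nlinarith⟩
    · exact Or.inr ⟨hx2, by nlinarith, hu.2⟩
  have h_small : unif (Icc 0 (4 * t ^ 2)) ≤ ENNReal.ofReal (4 * t ^ 2) := by
    simpa only [Real.volume_Icc, sub_zero] using unif_le_volume (Icc 0 (4 * t ^ 2))
  by_cases hx2 : x ≤ 2 * t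
  · rw [indicator_of_mem (by exact hx2)]
    calc unif {u | rdeMap (x, u) ≤ t}
        ≤ unif (Icc 0 (4 * t ^ 2) ∪ Icc ((1 - 2 * t) ^ 2) 1) :=
          unif_mono fun u hu h => (h_cases u hu h).imp id And.right
      _ ≤ ENNReal.ofReal (4 * t ^ 2) + ENNReal.ofReal (4 * t) := by
          refine (measure_union_le _ _).trans (add_le_add h_small ((unif_le_volume _).trans ?_))
          rw [Real.volume_Icc]
          exact ENNReal.ofReal_le_ofReal (by nlinarith)
  · rw [indicator_of_notMem (by exact hx2), add_zero]
    refine le_trans (unif_mono fun u hu h => ?_) h_small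
    exact (h_cases u hu h).resolve_right fun h' => hx2 h'.1

namespace IsRDESolution

variable {μ : Measure ℝ}

theorem ae_notMem (hμ : IsRDESolution μ) {S : Set ℝ} (hS : MeasurableSet S) (d : ℝ → ℝ)
    {s : ℝ} (hs : 0 < s) (h_out : ∀ x ∉ S, ∀ u ∈ Icc (0 : ℝ) 1, rdeMap (x, u) ∉ S)
    (h_in : ∀ x ∈ S, ∀ u ∈ Icc (0 : ℝ) 1, rdeMap (x, u) ∈ S → s ≤ √u * d x) :
    ∀ᵐ x ∂μ, x ∉ S := by
  have := hμ.1
  refine measure_eq_zero_iff_ae_notMem.1 <|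
    measure_eq_zero_of_map_prod_eq measurable_rdeMap hμ.2 hS (fun x hx => ?_) fun x hx => ?_
  · exact le_zero_iff.1 <| (unif_mono fun u hu h => (h_out x hx u hu h).elim).trans_eq
      measure_empty
  · exact (unif_mono fun u hu => h_in x hx u hu).trans_lt (unif_setOf_le_sqrt_mul_lt_one hs _)

theorem ae_nonneg (hμ : IsRDESolution μ) : ∀ᵐ x ∂μ, 0 ≤ x := by
  refine ae_le_of_forall_pos_ae_le_add fun s hs => ?_
  have h_out : ∀ x ∉ Iio (-s), ∀ u ∈ Icc (0 : ℝ) 1, rdeMap (x, u) ∉ Iio (-s) := by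
    intro x hx u hu
    simp only [rdeMap, mem_Iio, not_lt] at hx ⊢
    nlinarith [Real.sqrt_nonneg u, Real.sqrt_le_one.2 hu.2]
  have h_in : ∀ x ∈ Iio (-s), ∀ u ∈ Icc (0 : ℝ) 1, rdeMap (x, u) ∈ Iio (-s) → s ≤ √u * -x := by
    intro x _ u hu h
    simp only [rdeMap, mem_Iio] at h
    nlinarith [Real.sqrt_nonneg u, Real.sqrt_le_one.2 hu.2]
  filter_upwards [hμ.ae_notMem measurableSet_Iio _ hs h_out h_in] with x hx
  simp only [mem_Iio, not_lt] at hx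
  linarith

theorem ae_le_one (hμ : IsRDESolution μ) : ∀ᵐ x ∂μ, x ≤ 1 := by
  refine ae_le_of_forall_pos_ae_le_add fun s hs => ?_
  have h_out : ∀ x ∉ Ioi (1 + s), ∀ u ∈ Icc (0 : ℝ) 1, rdeMap (x, u) ∉ Ioi (1 + s) := by
    intro x hx u hu
    simp only [rdeMap, mem_Ioi, not_lt] at hx ⊢
    nlinarith [Real.sqrt_nonneg u, Real.sqrt_le_one.2 hu.2]
  have h_in : ∀ x ∈ Ioi (1 + s), ∀ u ∈ Icc (0 : ℝ) 1, rdeMap (x, u) ∈ Ioi (1 + s) →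
      s ≤ √u * (x - 1) := by
    intro x _ u hu h
    simp only [rdeMap, mem_Ioi] at h
    nlinarith [Real.sqrt_nonneg u, Real.sqrt_le_one.2 hu.2]
  filter_upwards [hμ.ae_notMem measurableSet_Ioi _ hs h_out h_in] with x hx
  simpa only [mem_Ioi, not_lt] using hx

theorem measure_Iic_le_rec (hμ : IsRDESolution μ) {t : ℝ} (ht : t ≤ 1 / 2) :
    μ (Iic t) ≤ ENNReal.ofReal (4 * t ^ 2) + ENNReal.ofReal (4 * t) * μ (Iic (2 * t)) := by
  have := hμ.1
  calc μ (Iic t) = ∫⁻ x, unif {u | rdeMap (x, u) ≤ t} ∂μ :=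
        measure_eq_lintegral_of_map_prod_eq measurable_rdeMap hμ.2 measurableSet_Iic
    _ ≤ ∫⁻ x, (ENNReal.ofReal (4 * t ^ 2)
          + (Iic (2 * t)).indicator (fun _ => ENNReal.ofReal (4 * t)) x) ∂μ :=
        lintegral_mono_ae (hμ.ae_nonneg.mono fun x hx => unif_setOf_rdeMap_le hx ht)
    _ = ENNReal.ofReal (4 * t ^ 2) + ENNReal.ofReal (4 * t) * μ (Iic (2 * t)) := by
        rw [lintegral_add_left measurable_const, lintegral_const,
          lintegral_indicator_const measurableSet_Iic, measure_univ, mul_one]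

theorem measure_Iic_le (hμ : IsRDESolution μ) {t : ℝ} (ht : 0 ≤ t) :
    μ (Iic t) ≤ ENNReal.ofReal (64 * t ^ 2) := by
  have := hμ.1
  rcases le_or_gt t (1 / 4) with ht4 | ht4
  · have h2 : μ (Iic (2 * t)) ≤ ENNReal.ofReal (4 * (2 * t) ^ 2 + 4 * (2 * t)) :=
      calc μ (Iic (2 * t))
          ≤ ENNReal.ofReal (4 * (2 * t) ^ 2) + ENNReal.ofReal (4 * (2 * t)) * 1 :=
            (hμ.measure_Iic_le_rec (by linarith)).trans
              (by gcongr; exact prob_le_one)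
        _ = _ := by rw [mul_one, ENNReal.ofReal_add (by positivity) (by positivity)]
    calc μ (Iic t)
        ≤ ENNReal.ofReal (4 * t ^ 2)
          + ENNReal.ofReal (4 * t) * ENNReal.ofReal (4 * (2 * t) ^ 2 + 4 * (2 * t)) :=
          (hμ.measure_Iic_le_rec (by linarith)).trans (by gcongr)
      _ = ENNReal.ofReal (4 * t ^ 2 + 4 * t * (4 * (2 * t) ^ 2 + 4 * (2 * t))) := by
          rw [← ENNReal.ofReal_mul (by positivity), ← ENNReal.ofReal_add (by positivity)
            (by positivity)]
      _ ≤ ENNReal.ofReal (64 * t ^ 2) := ENNReal.ofReal_le_ofReal (by nlinarith)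
  · refine prob_le_one.trans ?_
    rw [← ENNReal.ofReal_one]
    exact ENNReal.ofReal_le_ofReal (by nlinarith)

end IsRDESolution

/-- The solution `X` of the RDE `X =_d √U·X + √U·(1 − √U)` has finite negative moments
`E[X^{−2+ε}] < ∞` for every `ε > 0`. -/
theorem rde_negative_moment (μ : Measure ℝ) (hμ : IsRDESolution μ)
    (ε : ℝ) (hε : 0 < ε) :
    ∫⁻ x, ENNReal.ofReal (x ^ (-2 + ε)) ∂ μ < ⊤ := by
  have := hμ.1
  rcases lt_or_ge ε 2 with hε2 | hε2
  · have h := lintegral_rpow_neg_lt_top_of_measure_Iic_le hμ.ae_nonneg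
      (C := 64) (q := 2) (fun t ht => by simpa only [Real.rpow_two] using hμ.measure_Iic_le ht.le)
      (r := 2 - ε) (by linarith) (by linarith)
    rwa [neg_sub, sub_eq_neg_add] at h
  · calc ∫⁻ x, ENNReal.ofReal (x ^ (-2 + ε)) ∂μ ≤ ∫⁻ _, 1 ∂μ := by
          refine lintegral_mono_ae ?_
          filter_upwards [hμ.ae_nonneg, hμ.ae_le_one] with x h0 h1
          exact ENNReal.ofReal_le_one.2 (Real.rpow_le_one h0 h1 (by linarith))
      _ < ⊤ := by simp
end
end
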